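/- For all b ∈ [0,1/2] and p ∈ [0,1], the polynomial χ(b,p) := p + b(1 − 11p + 6p²) + b²(2 + 14p − 12p²) − b³(2 + 4p − 6p²) is nonnegative. In particular, χ(0,p) = p, χ(1/2,p) = (3/4)(1−p)², χ(b,0) = b + 2b²(1−b), and χ(b,1) = (1−2b)². -/
import Mathlib
noncomputable def chi (b p : ℝ) : ℝ :=
  p + b*(1 - 11*p + 6*p^2) + b^2*(2 + 14*p - 12*p^2) - b^3*(2 + 4*p - 6*p^2)

/-- `χ(b,p) ≥ 0` on `[0,1/2]×[0,1]`, with the stated boundary values. -/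
theorem stmt16 (b p : ℝ) (hb : b ∈ Set.Icc (0:ℝ) (1/2)) (hp : p ∈ Set.Icc (0:ℝ) 1) :
    0 ≤ chi b p ∧
    chi 0 p = p ∧
    chi (1/2) p = (3/4)*(1 - p)^2 ∧
    chi b 0 = b + 2*b^2*(1 - b) ∧
    chi b 1 = (1 - 2*b)^2 := by
  obtain ⟨hb0, hb1⟩ := hb
  obtain ⟨hp0, hp1⟩ := hp
  refine ⟨?_, by simp [chi], by unfold chi; ring, by unfold chi; ring, by unfold chi; ring⟩
  unfold chi
  have h1 : (0:ℝ) ≤ 1 - 2*b := by linarith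
  have h2 : (0:ℝ) ≤ 1 - p := by linarith
  nlinarith [mul_nonneg hb0 hp0, mul_nonneg h1 h2, mul_nonneg hb0 h2, mul_nonneg h1 hp0,
    mul_nonneg (mul_nonneg hb0 hb0) hp0, mul_nonneg (mul_nonneg h1 h1) h2,
    mul_nonneg (mul_nonneg hb0 h2) h2, mul_nonneg (mul_nonneg h1 hp0) hp0,
    mul_nonneg (mul_nonneg hb0 h1) h2, mul_nonneg (mul_nonneg hb0 h1) hp0,
    mul_nonneg (mul_nonneg hb0 hp0) h2, mul_nonneg (mul_nonneg h1 hp0) h2,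
    sq_nonneg (1-2*b), sq_nonneg (1-p), sq_nonneg (b-p), sq_nonneg (b*(1-p)),
    sq_nonneg ((1-2*b)*(1-p)), sq_nonneg ((1-2*b)-(1-p)), sq_nonneg (p-2*b),
    mul_nonneg (mul_nonneg hb0 hb0) hb0]
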